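/- arXiv:2408.05291 — 2 statements merged into one kernel-verified Lean document; each statement's English description precedes it below -/
import Mathlib

section
/- Assume the final-state observability inequality ∫₀ᵀ ‖B* U*_t q₀‖² dt ≥ K_T² ‖U*_T q₀‖² holds for all q₀ ∈ D(A*), where U is the C₀-semigroup generated by A and B is a bounded control operator. Then for every initial state y₀ there exists a control u ∈ L²(0,T;U) such that the mild solution y(t) = U_t y₀ + ∫₀ᵗ U_{t−s} B u(s) ds satisfies y(T) = 0. -/
open Set MeasureTheory intervalIntegral Filter TopologicalSpace

/-!
Duality. The observation operator `Ψ q = B* U*_{T-·} q`, a bounded map `X → L²(0,T;U)`, is the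
adjoint of the input map `u ↦ ∫₀ᵀ U_{T-s} B u(s) ds`. By continuity of `Ψ` the observability
inequality extends from `D` to all of `X`, so `q ↦ ⟪-U_T y₀, q⟫` is bounded by `‖y₀‖ / K · ‖Ψ q‖`.
Such a functional factors through the range of `Ψ`; Hahn–Banach and Riesz then write it as
`⟪u, Ψ q⟫` for some `u ∈ L²`, and duality turns this into `∫₀ᵀ U_{T-s} B u(s) ds = -U_T y₀`.
Since `s ↦ B* U*_{T-s} q` is only weakly continuous, its measurability needs Pettis' argument:
it takes values in a separable closed subspace, where a Hilbert basis expansion applies.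
-/

theorem exists_inner_eq_of_abs_le {X H : Type*} [AddCommGroup X] [Module ℝ X]
    [NormedAddCommGroup H] [InnerProductSpace ℝ H] [CompleteSpace H]
    (Ψ : X →ₗ[ℝ] H) (ℓ : X →ₗ[ℝ] ℝ) {C : ℝ} (hℓ : ∀ q, |ℓ q| ≤ C * ‖Ψ q‖) :
    ∃ u : H, ∀ q, inner ℝ u (Ψ q) = ℓ q := by
  have hker : LinearMap.ker Ψ ≤ LinearMap.ker ℓ := fun q hq => by
    simpa [LinearMap.mem_ker.1 hq] using hℓ q
  let ℓ' : LinearMap.range Ψ →ₗ[ℝ] ℝ :=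
    (LinearMap.ker Ψ).liftQ ℓ hker ∘ₗ Ψ.quotKerEquivRange.symm.toLinearMap
  have hℓ' : ∀ q, ℓ' ⟨Ψ q, LinearMap.mem_range_self Ψ q⟩ = ℓ q := fun q => by
    simp [ℓ']
  have hbound : ∀ y, ‖ℓ' y‖ ≤ C * ‖y‖ := by
    rintro ⟨_, q, rfl⟩
    simpa [hℓ'] using hℓ q
  obtain ⟨g, hg, -⟩ := exists_extension_norm_eq _ (ℓ'.mkContinuous C hbound)
  refine ⟨(InnerProductSpace.toDual ℝ H).symm g, fun q => ?_⟩
  rw [InnerProductSpace.toDual_symm_apply, ← hℓ']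
  exact hg ⟨Ψ q, LinearMap.mem_range_self Ψ q⟩

theorem IsCompact.exists_bound_of_continuousOn_apply {𝕜 α E F : Type*}
    [NontriviallyNormedField 𝕜] [TopologicalSpace α] [NormedAddCommGroup E] [NormedSpace 𝕜 E]
    [CompleteSpace E] [NormedAddCommGroup F] [NormedSpace 𝕜 F] {K : Set α} (hK : IsCompact K)
    {L : α → E →L[𝕜] F} (hL : ∀ x, ContinuousOn (fun a => L a x) K) :
    ∃ C, ∀ a ∈ K, ‖L a‖ ≤ C := by
  obtain ⟨C, hC⟩ := banach_steinhaus (g := fun a : K => L a) fun x => by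
    obtain ⟨C, hC⟩ := hK.exists_bound_of_continuousOn (hL x)
    exact ⟨C, fun a => hC a a.2⟩
  exact ⟨C, fun a ha => hC ⟨a, ha⟩⟩

theorem Orthonormal.countable {𝕜 E ι : Type*} [RCLike 𝕜] [NormedAddCommGroup E]
    [InnerProductSpace 𝕜 E] [SeparableSpace E] {v : ι → E} (hv : Orthonormal 𝕜 v) :
    Countable ι := by
  refine Pairwise.countable_of_isOpen_disjoint (s := fun i => Metric.ball (v i) 2⁻¹)
    (fun i j hij => Metric.ball_disjoint_ball ?_) (fun _ => Metric.isOpen_ball)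
    (fun i => ⟨v i, Metric.mem_ball_self (by norm_num)⟩)
  have : dist (v i) (v j) ^ 2 = 2 := by
    rw [dist_eq_norm, @norm_sub_sq 𝕜, hv.1 i, hv.1 j, hv.2 hij]
    norm_num
  nlinarith [dist_nonneg (x := v i) (y := v j)]

section Pettis

variable {α E : Type*} [NormedAddCommGroup E] [InnerProductSpace ℝ E] [CompleteSpace E]

theorem mem_topologicalClosure_span_of_continuousOn_inner [TopologicalSpace α] {f : α → E}
    {s t : Set α} (hf : ∀ v, ContinuousOn (fun a => inner ℝ (f a) v) s) (hts : t ⊆ s)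
    (hst : s ⊆ closure t) {a : α} (ha : a ∈ s) :
    f a ∈ (Submodule.span ℝ (f '' t)).topologicalClosure := by
  rw [← Submodule.orthogonal_orthogonal_eq_closure, Submodule.mem_orthogonal]
  intro w hw
  have hzero : EqOn (fun b => inner ℝ (f b) w) 0 t := fun b hb =>
    (Submodule.mem_orthogonal _ w).1 hw _ (Submodule.subset_span (mem_image_of_mem f hb))
  rw [real_inner_comm]
  exact hzero.of_subset_closure (hf w) continuousOn_const hts hst ha

theorem aestronglyMeasurable_of_forall_inner [MeasurableSpace α] {μ : Measure α} {f : α → E}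
    {Y : Submodule ℝ E} (hYc : IsClosed (Y : Set E)) (hYs : IsSeparable (Y : Set E))
    (hfY : ∀ᵐ a ∂μ, f a ∈ Y) (hf : ∀ v, AEStronglyMeasurable (fun a => inner ℝ v (f a)) μ) :
    AEStronglyMeasurable f μ := by
  have : CompleteSpace Y := hYc.completeSpace_coe
  have : SeparableSpace Y := hYs.separableSpace
  obtain ⟨w, b, -⟩ := exists_hilbertBasis ℝ Y
  have : Countable w := b.orthonormal.countable
  refine aestronglyMeasurable_of_tendsto_ae (atTop : Filter (Finset w))
    (f := fun n a => ∑ i ∈ n, inner ℝ (b i : E) (f a) • (b i : E))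
    (fun n => Finset.aestronglyMeasurable_fun_sum n fun i _ => (hf _).smul_const _) ?_
  filter_upwards [hfY] with a ha
  have := (b.hasSum_repr ⟨f a, ha⟩).mapL Y.subtypeL
  simpa [HasSum, b.repr_apply_apply] using this

theorem aestronglyMeasurable_of_continuousOn_inner [TopologicalSpace α]
    [PseudoMetrizableSpace α] [MeasurableSpace α] [OpensMeasurableSpace α] {μ : Measure α}
    {f : α → E} {s : Set α} (hs : IsSeparable s) (hsm : MeasurableSet s)
    (hf : ∀ v, ContinuousOn (fun a => inner ℝ (f a) v) s) :
    AEStronglyMeasurable f (μ.restrict s) := by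
  obtain ⟨t, hts, htc, hst⟩ := hs.exists_countable_dense_subset
  set Y := (Submodule.span ℝ (f '' t)).topologicalClosure
  refine aestronglyMeasurable_of_forall_inner (Y := Y) (Submodule.isClosed_topologicalClosure _)
    ?_ ((ae_restrict_iff' hsm).2 (ae_of_all _ fun a ha =>
      mem_topologicalClosure_span_of_continuousOn_inner hf hts hst ha)) fun v => ?_
  · rw [Submodule.topologicalClosure_coe]
    exact (htc.image f).isSeparable.span.closure
  · refine ContinuousOn.aestronglyMeasurable ?_ hsm
    simpa only [real_inner_comm v] using hf v

end Pettis

section OperatorFamilies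

variable {𝕜 α E F : Type*} [NontriviallyNormedField 𝕜] [MeasurableSpace α] {μ : Measure α}
  [NormedAddCommGroup E] [NormedSpace 𝕜 E] [NormedAddCommGroup F] [NormedSpace 𝕜 F]

theorem MeasureTheory.AEStronglyMeasurable.clm_apply_of_forall {L : α → E →L[𝕜] F} {g : α → E}
    (hL : ∀ x, AEStronglyMeasurable (fun a => L a x) μ) (hg : AEStronglyMeasurable g μ) :
    AEStronglyMeasurable (fun a => L a (g a)) μ := by
  have hsimple : ∀ φ : SimpleFunc α E, AEStronglyMeasurable (fun a => L a (φ a)) μ := by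
    refine fun φ => SimpleFunc.induction (fun c s hs => ?_) (fun φ ψ _ hφ hψ => ?_) φ
    · convert (hL c).indicator hs using 1
      ext a
      by_cases ha : a ∈ s <;> simp [ha]
    · simpa only [SimpleFunc.coe_add, Pi.add_apply, map_add] using hφ.fun_add hψ
  have hgm := hg.stronglyMeasurable_mk
  refine (aestronglyMeasurable_of_tendsto_ae atTop (fun n => hsimple (hgm.approx n))
    (ae_of_all _ fun a => ((L a).continuous.tendsto _).comp (hgm.tendsto_approx a))).congr ?_
  filter_upwards [hg.ae_eq_mk] with a ha
  rw [ha]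

theorem MeasureTheory.Integrable.clm_apply_of_ae_norm_le {L : α → E →L[𝕜] F} {g : α → E} {C : ℝ}
    (hL : ∀ x, AEStronglyMeasurable (fun a => L a x) μ) (hC : ∀ᵐ a ∂μ, ‖L a‖ ≤ C)
    (hg : Integrable g μ) : Integrable (fun a => L a (g a)) μ := by
  refine (hg.norm.const_mul C).mono' (hg.1.clm_apply_of_forall hL) ?_
  filter_upwards [hC] with a ha
  exact (L a).le_of_opNorm_le ha _

theorem exists_clm_Lp_ae_eq (p : ENNReal) [Fact (1 ≤ p)] [IsFiniteMeasure μ]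
    {L : α → E →L[𝕜] F} (hL : ∀ x, AEStronglyMeasurable (fun a => L a x) μ) {C : ℝ}
    (hC : ∀ᵐ a ∂μ, ‖L a‖ ≤ C) :
    ∃ Φ : E →L[𝕜] Lp F p μ, ∀ x, Φ x =ᵐ[μ] fun a => L a x := by
  have hbound : ∀ x, ∀ᵐ a ∂μ, ‖L a x‖ ≤ max C 0 * ‖x‖ := fun x => by
    filter_upwards [hC] with a ha
    exact (L a).le_of_opNorm_le (ha.trans (le_max_left _ _)) x
  have hmem : ∀ x, MemLp (fun a => L a x) p μ := fun x => .of_bound (hL x) _ (hbound x)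
  let Φ : E →ₗ[𝕜] Lp F p μ :=
    { toFun x := (hmem x).toLp _
      map_add' x y := by
        rw [← MemLp.toLp_add]
        exact MemLp.toLp_congr _ _ (ae_of_all _ fun a => map_add _ _ _)
      map_smul' c x := by
        rw [RingHom.id_apply, ← MemLp.toLp_const_smul]
        exact MemLp.toLp_congr _ _ (ae_of_all _ fun a => map_smul _ _ _) }
  refine ⟨Φ.mkContinuous (measureUnivNNReal μ ^ p.toReal⁻¹ * max C 0) fun x => ?_,
    fun x => (hmem x).coeFn_toLp⟩
  rw [mul_assoc]
  refine Lp.norm_le_of_ae_bound (by positivity) ?_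
  filter_upwards [(hmem x).coeFn_toLp, hbound x] with a ha hb
  simpa [Φ, ha] using hb

end OperatorFamilies

theorem MeasureTheory.L2.norm_sq_eq_integral {α E : Type*} [MeasurableSpace α] {μ : Measure α}
    [NormedAddCommGroup E] [InnerProductSpace ℝ E] (f : Lp E 2 μ) :
    ‖f‖ ^ 2 = ∫ a, ‖f a‖ ^ 2 ∂μ := by
  simp only [← real_inner_self_eq_norm_sq, L2.inner_def]

section Duality

variable {α X U : Type*} [MeasurableSpace α] {μ : Measure α}
  [NormedAddCommGroup X] [InnerProductSpace ℝ X] [CompleteSpace X]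
  [NormedAddCommGroup U] [InnerProductSpace ℝ U] [CompleteSpace U]

open ContinuousLinearMap in
theorem exists_clm_Lp_ae_eq_adjoint [TopologicalSpace α] [PseudoMetrizableSpace α]
    [OpensMeasurableSpace α] {s : Set α} [IsFiniteMeasure (μ.restrict s)]
    (hs : IsSeparable s) (hsm : MeasurableSet s) {Φ : α → U →L[ℝ] X}
    (hΦ : ∀ x, ContinuousOn (fun a => Φ a x) s) {M : ℝ} (hM : ∀ a ∈ s, ‖Φ a‖ ≤ M) :
    ∃ Ψ : X →L[ℝ] Lp U 2 (μ.restrict s), ∀ q, Ψ q =ᵐ[μ.restrict s] fun a => adjoint (Φ a) q := by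
  refine exists_clm_Lp_ae_eq 2 (fun q => aestronglyMeasurable_of_continuousOn_inner hs hsm
    fun v => ?_) (C := M) (ae_restrict_of_forall_mem hsm fun a ha => ?_)
  · simp_rw [adjoint_inner_left]
    exact continuousOn_const.inner (hΦ v)
  · simpa only [LinearIsometryEquiv.norm_map] using hM a ha

theorem inner_integral_clm_apply_eq_L2_inner {Φ : α → U →L[ℝ] X} {u : Lp U 2 μ}
    (hu : Integrable (fun a => Φ a (u a)) μ) {q : X} {v : Lp U 2 μ}
    (hv : v =ᵐ[μ] fun a => ContinuousLinearMap.adjoint (Φ a) q) :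
    inner ℝ (∫ a, Φ a (u a) ∂μ) q = inner ℝ u v := by
  rw [real_inner_comm, ← integral_inner hu, L2.inner_def]
  refine integral_congr_ae ?_
  filter_upwards [hv] with a ha
  rw [ha, ContinuousLinearMap.adjoint_inner_right, real_inner_comm]

theorem exists_integral_clm_apply_eq_of_abs_inner_le [IsFiniteMeasure μ] {Φ : α → U →L[ℝ] X}
    (hΦ : ∀ x, AEStronglyMeasurable (fun a => Φ a x) μ) {M : ℝ} (hM : ∀ᵐ a ∂μ, ‖Φ a‖ ≤ M)
    (Ψ : X →ₗ[ℝ] Lp U 2 μ) (hΨ : ∀ q, Ψ q =ᵐ[μ] fun a => ContinuousLinearMap.adjoint (Φ a) q)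
    {y : X} {C : ℝ} (hy : ∀ q, |inner ℝ y q| ≤ C * ‖Ψ q‖) :
    ∃ u : Lp U 2 μ, Integrable (fun a => Φ a (u a)) μ ∧ ∫ a, Φ a (u a) ∂μ = y := by
  obtain ⟨u, hu⟩ := exists_inner_eq_of_abs_le Ψ (innerₛₗ ℝ y) hy
  have hint := ((Lp.memLp u).integrable one_le_two).clm_apply_of_ae_norm_le hΦ hM
  refine ⟨u, hint, ext_inner_right ℝ fun q => ?_⟩
  rw [inner_integral_clm_apply_eq_L2_inner hint (hΨ q), hu]
  rfl

end Duality

section Observability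

open ContinuousLinearMap

variable {X U : Type*} [NormedAddCommGroup X] [InnerProductSpace ℝ X] [CompleteSpace X]
  [NormedAddCommGroup U] [InnerProductSpace ℝ U] [CompleteSpace U]
  (𝒰 : ℝ → X →L[ℝ] X) (B : U →L[ℝ] X) {T : ℝ}

theorem norm_sq_eq_integral_norm_sq_adjoint_orbit (hT : 0 ≤ T) {q : X}
    {v : Lp U 2 (volume.restrict (Ioc 0 T))}
    (hv : v =ᵐ[volume.restrict (Ioc 0 T)] fun s => adjoint (𝒰 (T - s) ∘L B) q) :
    ‖v‖ ^ 2 = ∫ t in 0..T, ‖adjoint B (adjoint (𝒰 t) q)‖ ^ 2 := by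
  have hnorm : ∫ s in Ioc 0 T, ‖v s‖ ^ 2 = ∫ s in Ioc 0 T, ‖adjoint (𝒰 (T - s) ∘L B) q‖ ^ 2 :=
    integral_congr_ae (by filter_upwards [hv] with s hs; rw [hs])
  rw [L2.norm_sq_eq_integral, hnorm, ← intervalIntegral.integral_of_le hT]
  simpa only [adjoint_comp, comp_apply, sub_zero, sub_self] using
    intervalIntegral.integral_comp_sub_left (a := 0) (b := T)
      (fun t => ‖adjoint B (adjoint (𝒰 t) q)‖ ^ 2) T

theorem le_norm_of_observability (hT : 0 ≤ T) {D : Set X} (hD : Dense D) {K : ℝ}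
    (hobs : ∀ q ∈ D, K ^ 2 * ‖adjoint (𝒰 T) q‖ ^ 2 ≤
      ∫ t in 0..T, ‖adjoint B (adjoint (𝒰 t) q)‖ ^ 2)
    {Ψ : X →L[ℝ] Lp U 2 (volume.restrict (Ioc 0 T))}
    (hΨ : ∀ q, Ψ q =ᵐ[volume.restrict (Ioc 0 T)] fun s => adjoint (𝒰 (T - s) ∘L B) q) (q : X) :
    K * ‖adjoint (𝒰 T) q‖ ≤ ‖Ψ q‖ := by
  refine hD.induction (fun q hq => ?_) (isClosed_le (by fun_prop) (by fun_prop)) q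
  refine le_of_pow_le_pow_left₀ two_ne_zero (norm_nonneg _) ?_
  rw [mul_pow, norm_sq_eq_integral_norm_sq_adjoint_orbit 𝒰 B hT (hΨ q)]
  exact hobs q hq

end Observability

theorem stmt_8_general {X U : Type*}
    [NormedAddCommGroup X] [InnerProductSpace ℝ X] [CompleteSpace X]
    [NormedAddCommGroup U] [InnerProductSpace ℝ U] [CompleteSpace U]
    (𝒰 : ℝ → X →L[ℝ] X)
    (hcont : ∀ x : X, ContinuousOn (fun t => 𝒰 t x) (Ici 0))
    (B : U →L[ℝ] X)
    (D : Submodule ℝ X) (hD : Dense (D : Set X))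
    (T K : ℝ) (hT : 0 < T) (hK : 0 < K)
    (hobs : ∀ q₀ ∈ D,
      K ^ 2 * ‖(ContinuousLinearMap.adjoint (𝒰 T)) q₀‖ ^ 2 ≤
        ∫ t in (0:ℝ)..T,
          ‖(ContinuousLinearMap.adjoint B)
            ((ContinuousLinearMap.adjoint (𝒰 t)) q₀)‖ ^ 2) :
    ∀ y₀ : X, ∃ u : ℝ → U,
      MemLp u 2 (volume.restrict (Ioc 0 T)) ∧
      IntervalIntegrable (fun s => (𝒰 (T - s)) (B (u s))) volume 0 T ∧
      (𝒰 T) y₀ + ∫ s in (0:ℝ)..T, (𝒰 (T - s)) (B (u s)) = 0 := by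
  intro y₀
  have hΦ : ∀ x, ContinuousOn (fun s => ((𝒰 (T - s)).comp B) x) (Icc 0 T) := fun x =>
    (hcont (B x)).comp (continuousOn_const.sub continuousOn_id) fun s hs => sub_nonneg.2 hs.2
  obtain ⟨M, hM⟩ := isCompact_Icc.exists_bound_of_continuousOn_apply hΦ
  have hΦ' := fun x => (hΦ x).mono Ioc_subset_Icc_self
  have hM' := fun s hs => hM s (Ioc_subset_Icc_self hs)
  obtain ⟨Ψ, hΨ⟩ :=
    exists_clm_Lp_ae_eq_adjoint (μ := volume) (.of_separableSpace _) measurableSet_Ioc hΦ' hM'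
  have hΨ_obs := le_norm_of_observability 𝒰 B hT.le hD hobs hΨ
  have hy : ∀ q, |inner ℝ (-𝒰 T y₀) q| ≤ ‖y₀‖ / K * ‖Ψ q‖ := fun q =>
    calc |inner ℝ (-𝒰 T y₀) q| = |inner ℝ y₀ (ContinuousLinearMap.adjoint (𝒰 T) q)| := by
          rw [inner_neg_left, abs_neg, ContinuousLinearMap.adjoint_inner_right]
      _ ≤ ‖y₀‖ * ‖ContinuousLinearMap.adjoint (𝒰 T) q‖ := abs_real_inner_le_norm _ _
      _ ≤ ‖y₀‖ * (‖Ψ q‖ / K) := by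
          gcongr
          rw [le_div_iff₀ hK, mul_comm]
          exact hΨ_obs q
      _ = ‖y₀‖ / K * ‖Ψ q‖ := by ring
  obtain ⟨u, hint, hu⟩ := exists_integral_clm_apply_eq_of_abs_inner_le
    (fun x => (hΦ' x).aestronglyMeasurable measurableSet_Ioc)
    (ae_restrict_of_forall_mem measurableSet_Ioc hM') Ψ.toLinearMap hΨ hy
  refine ⟨u, Lp.memLp u, (intervalIntegrable_iff_integrableOn_Ioc_of_le hT.le).2 hint, ?_⟩
  rw [intervalIntegral.integral_of_le hT.le]
  exact add_eq_zero_iff_eq_neg'.2 hu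

/-- final-state observability of `(A*, B*)` implies null controllability:
for every `y₀` there is a control `u ∈ L²(0,T;U)` with
`U_T y₀ + ∫₀ᵀ U_{T−s} B u(s) ds = 0`. -/
theorem stmt_8 {X U : Type*}
    [NormedAddCommGroup X] [InnerProductSpace ℝ X] [CompleteSpace X]
    [NormedAddCommGroup U] [InnerProductSpace ℝ U] [CompleteSpace U]
    (𝒰 : ℝ → X →L[ℝ] X)
    (h0 : 𝒰 0 = ContinuousLinearMap.id ℝ X)
    (hsemi : ∀ s t : ℝ, 0 ≤ s → 0 ≤ t → 𝒰 (s + t) = (𝒰 s).comp (𝒰 t))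
    (hcont : ∀ x : X, ContinuousOn (fun t => 𝒰 t x) (Ici 0))
    (B : U →L[ℝ] X)
    (D : Submodule ℝ X) (hD : Dense (D : Set X))
    (T K : ℝ) (hT : 0 < T) (hK : 0 < K)
    (hobs : ∀ q₀ ∈ D,
      K ^ 2 * ‖(ContinuousLinearMap.adjoint (𝒰 T)) q₀‖ ^ 2 ≤
        ∫ t in (0:ℝ)..T,
          ‖(ContinuousLinearMap.adjoint B)
            ((ContinuousLinearMap.adjoint (𝒰 t)) q₀)‖ ^ 2) :
    ∀ y₀ : X, ∃ u : ℝ → U,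
      MemLp u 2 (volume.restrict (Ioc 0 T)) ∧
      IntervalIntegrable (fun s => (𝒰 (T - s)) (B (u s))) volume 0 T ∧
      (𝒰 T) y₀ + ∫ s in (0:ℝ)..T, (𝒰 (T - s)) (B (u s)) = 0 :=
  stmt_8_general 𝒰 hcont B D hD T K hT hK hobs
end

section
/- If β(a,s,ŝ) = 0 for a ∈ (0,a₂) and S₂* < a₂ − a₁, then the renewal trace satisfies q(x,0,s,t) = 0 for almost every x ∈ Ω, s ∈ (α*, S), and t ∈ (a₁ + S₂*, T), where α* is defined by G(s₂) − G(α*) = a₁. -/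
open Set MeasureTheory intervalIntegral

/-- if `β(a,s,ŝ) = 0` for `a ∈ (0,a₂)` and `S₂* < a₂ − a₁`, then the
renewal trace of the mild solution vanishes: `q(0,s,t) = 0` for `s ∈ (α*, S)` and
`t ∈ (a₁ + S₂*, T)`, where `G(s₂) − G(α*) = a₁`. -/
theorem stmt_11 {H : Type*} [NormedAddCommGroup H] [NormedSpace ℝ H] [CompleteSpace H]
    (A S T a₁ a₂ s₁ s₂ : ℝ) (hA : 0 < A) (hS : 0 < S) (hT : 0 < T)
    (ha₁ : 0 ≤ a₁) (ha₁₂ : a₁ < a₂) (ha₂ : a₂ ≤ A)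
    (hs₁ : 0 ≤ s₁) (hs₁₂ : s₁ < s₂) (hs₂ : s₂ ≤ S)
    (g : ℝ → ℝ) (hg : ContinuousOn g (Icc 0 S)) (hgpos : ∀ u ∈ Icc 0 S, 0 < g u)
    (G Ginv : ℝ → ℝ)
    (hG : ∀ u ∈ Icc 0 S, G u = ∫ v in (0:ℝ)..u, 1 / g v)
    (hGinv₁ : ∀ u ∈ Icc 0 S, Ginv (G u) = u)
    (hGinv₂ : ∀ y ∈ Icc 0 (G S), G (Ginv y) = y)
    (S₂star : ℝ) (hS₂star : S₂star = G S - G s₂)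
    (hgap : S₂star < a₂ - a₁)
    (αstar : ℝ) (hαpos : 0 < αstar) (hαlt : αstar < s₂)
    (hαdef : G s₂ - G αstar = a₁)
    (E : ℝ → H →L[ℝ] H) (hE0 : E 0 = ContinuousLinearMap.id ℝ H)
    (β : ℝ → ℝ → ℝ → ℝ)
    (hβzero : ∀ a ∈ Ioo 0 a₂, ∀ s' sh, β a s' sh = 0)
    (q : ℝ → ℝ → ℝ → H)
    (hbda : ∀ s' t, q A s' t = 0)
    (hbds : ∀ a t, q a S t = 0)
    (hmild : ∀ a s' t l₀ : ℝ, 0 ≤ a → a ≤ A → 0 ≤ s' → s' ≤ S → 0 < t → t ≤ T →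
      max (t - (G S - G s')) (t - (A - a)) ≤ l₀ → 0 ≤ l₀ → l₀ ≤ t →
      q a s' t = E (t - l₀) (q (a + t - l₀) (Ginv (G s' + t - l₀)) l₀) +
        ∫ l in l₀..t, E (t - l)
          (∫ sh in (0:ℝ)..S, β (a + t - l) (Ginv (G s' + t - l)) sh • q 0 sh l)) :
    ∀ s' t : ℝ, αstar < s' → s' < S → a₁ + S₂star < t → t < T →
      q 0 s' t = 0 := by
  intro s' t hαs' hs'S ht hT'
  -- continuity of 1/g
  have hgne : ∀ x ∈ Icc (0:ℝ) S, g x ≠ 0 := fun x hx => (hgpos x hx).ne'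
  have hcont : ContinuousOn (fun v => 1 / g v) (Icc 0 S) :=
    continuousOn_const.div hg hgne
  -- monotonicity of G on [0,S]
  have hGmono : ∀ u v : ℝ, u ∈ Icc 0 S → v ∈ Icc 0 S → u ≤ v → G u ≤ G v := by
    intro u v hu hv huv
    have hint : ∀ w : ℝ, w ∈ Icc (0:ℝ) S → IntervalIntegrable (fun v => 1 / g v) volume 0 w := by
      intro w hw
      apply (hcont.mono ?_).intervalIntegrable
      rw [uIcc_of_le hw.1]
      exact Icc_subset_Icc le_rfl hw.2
    have hsub : G v - G u = ∫ x in u..v, 1 / g x := by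
      rw [hG u hu, hG v hv]
      exact intervalIntegral.integral_interval_sub_left (hint v hv) (hint u hu)
    have hnn : 0 ≤ ∫ x in u..v, 1 / g x :=
      intervalIntegral.integral_nonneg huv (fun x hx => by
        have hgx := hgpos x ⟨le_trans hu.1 hx.1, le_trans hx.2 hv.2⟩
        positivity)
    linarith
  have hs'mem : s' ∈ Icc (0:ℝ) S := ⟨le_of_lt (lt_trans hαpos hαs'), le_of_lt hs'S⟩
  have hαmem : αstar ∈ Icc (0:ℝ) S := ⟨le_of_lt hαpos, le_trans (le_of_lt hαlt) hs₂⟩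
  have hSmem : S ∈ Icc (0:ℝ) S := ⟨le_of_lt hS, le_rfl⟩
  have hGα : G αstar ≤ G s' := hGmono αstar s' hαmem hs'mem (le_of_lt hαs')
  have hGs'S : G s' ≤ G S := hGmono s' S hs'mem hSmem (le_of_lt hs'S)
  have hkey : G S - G s' ≤ a₁ + S₂star := by rw [hS₂star]; linarith
  set l₀ : ℝ := t - (G S - G s') with hl₀def
  have htpos : 0 < t := lt_of_le_of_lt (by linarith [hS₂star, hGmono s₂ S ⟨le_trans hs₁ (le_of_lt hs₁₂), hs₂⟩ hSmem hs₂]) ht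
  have hl₀pos : 0 < l₀ := by
    have : G S - G s' < t := lt_of_le_of_lt hkey ht
    simp only [hl₀def]; linarith
  have hl₀le : l₀ ≤ t := by simp only [hl₀def]; linarith
  have hGSA : G S - G s' ≤ A := by linarith
  have hmax : max (t - (G S - G s')) (t - (A - 0)) ≤ l₀ := by
    apply max_le
    · simp [hl₀def]
    · simp only [hl₀def]; linarith
  have heq := hmild 0 s' t l₀ le_rfl (le_of_lt hA) hs'mem.1 hs'mem.2 htpos (le_of_lt hT')
    hmax (le_of_lt hl₀pos) hl₀le
  have e1 : (0:ℝ) + t - l₀ = G S - G s' := by simp only [hl₀def]; ring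
  have e2 : G s' + t - l₀ = G S := by simp only [hl₀def]; ring
  have hGinvS : Ginv (G S) = S := hGinv₁ S hSmem
  have hfirst : q ((0:ℝ) + t - l₀) (Ginv (G s' + t - l₀)) l₀ = 0 := by
    rw [e1, e2, hGinvS, hbds]
  have hintzero : (∫ l in l₀..t, E (t - l)
      (∫ sh in (0:ℝ)..S, β ((0:ℝ) + t - l) (Ginv (G s' + t - l)) sh • q 0 sh l)) = 0 := by
    have hne : ∀ᵐ x : ℝ, x ≠ t := by
      rw [ae_iff]
      have : {x : ℝ | ¬ x ≠ t} = {t} := by ext x; simp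
      rw [this]
      exact Real.volume_singleton
    rw [intervalIntegral.integral_congr_ae (g := fun _ => (0 : H)) ?_,
      intervalIntegral.integral_zero]
    filter_upwards [hne] with l hl hmem
    rw [uIoc_of_le hl₀le] at hmem
    have hlt : l < t := lt_of_le_of_ne hmem.2 hl
    have ha_pos : 0 < (0:ℝ) + t - l := by linarith
    have ha_lt : (0:ℝ) + t - l < a₂ := by
      have : t - l < t - l₀ := by linarith [hmem.1]
      have : t - l < G S - G s' := by simp only [hl₀def] at this; linarith
      linarith
    have : (∫ sh in (0:ℝ)..S, β ((0:ℝ) + t - l) (Ginv (G s' + t - l)) sh • q 0 sh l) = 0 := by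
      have : ∀ sh, β ((0:ℝ) + t - l) (Ginv (G s' + t - l)) sh • q 0 sh l = 0 := by
        intro sh
        rw [hβzero _ ⟨ha_pos, ha_lt⟩, zero_smul]
      simp only [this, intervalIntegral.integral_zero]
    rw [this, map_zero]
  rw [heq, hfirst, map_zero, hintzero, add_zero]
end
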